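/- arXiv:2005.00504 — 9 statements merged into one kernel-verified Lean document; each statement's English description precedes it below -/
import Mathlib

section
/- For all real p in (-∞, 0), (1/2 - 1/40)^p + (1/2)^p ≤ 1 + (2/11.33)^p. -/
theorem numeric_ineq_neg (p : ℝ) (hp : p < 0) :
    ((1/2 - 1/40 : ℝ)) ^ p + ((1/2 : ℝ)) ^ p ≤ 1 + ((2/11.33 : ℝ)) ^ p := by
  have hx : (1:ℝ) ≤ ((1/2 - 1/40 : ℝ)) ^ p :=
    Real.one_le_rpow_of_pos_of_le_one_of_nonpos (by norm_num) (by norm_num) hp.le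
  have hy : (1:ℝ) ≤ ((1/2 : ℝ)) ^ p :=
    Real.one_le_rpow_of_pos_of_le_one_of_nonpos (by norm_num) (by norm_num) hp.le
  have hmul : ((1/2 - 1/40 : ℝ)) ^ p * ((1/2 : ℝ)) ^ p = ((19/80 : ℝ)) ^ p := by
    rw [← Real.mul_rpow (by norm_num) (by norm_num)]
    norm_num
  have h1 : ((1/2 - 1/40 : ℝ)) ^ p + ((1/2 : ℝ)) ^ p ≤ 1 + ((19/80 : ℝ)) ^ p := by
    nlinarith [mul_nonneg (sub_nonneg.2 hx) (sub_nonneg.2 hy)]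
  have h2 : ((19/80 : ℝ)) ^ p ≤ ((2/11.33 : ℝ)) ^ p := by
    have : (2/11.33 : ℝ) = 200/1133 := by norm_num
    rw [this]
    exact Real.rpow_le_rpow_of_nonpos (by norm_num) (by norm_num) hp.le
  linarith
end

section
/- For all real p in (0, 0.4), (1/2 - 1/40)^p + (1/2)^p ≥ 1 + (2/11.33)^p. -/
open Real Finset

/-- cube monotonicity helper: for `-m ≤ u ≤ 0`, `m^2 * u ≤ u^3`. -/
lemma cube_lb {u m : ℝ} (hu : -m ≤ u) (hu0 : u ≤ 0) : m ^ 2 * u ≤ u ^ 3 := by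
  nlinarith [mul_nonneg (mul_nonneg (by linarith : (0:ℝ) ≤ -u) (by linarith : (0:ℝ) ≤ m - u)) (by linarith : (0:ℝ) ≤ u + m)]

/-- Taylor lower bound for exp on `[-1,0]`. -/
lemma exp_cubic_lb {x : ℝ} (h1 : -1 ≤ x) (h2 : x ≤ 0) :
    1 + x + x ^ 2 / 2 + (2/9) * x ^ 3 ≤ Real.exp x := by
  have hx : |x| ≤ 1 := abs_le.2 ⟨h1, by linarith⟩
  have h := Real.exp_bound hx (n := 3) (by norm_num)
  have h' := (abs_sub_le_iff.1 h).2
  have hs : ∑ m ∈ Finset.range 3, x ^ m / m.factorial = 1 + x + x ^ 2 / 2 := by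
    simp [Finset.sum_range_succ, Nat.factorial]
  rw [hs] at h'
  have habs : |x| ^ 3 = -(x ^ 3) := by
    rw [abs_of_nonpos h2]; ring
  rw [habs] at h'
  norm_num [Nat.factorial] at h' ⊢
  linarith

lemma exp072 : Real.exp 0.72 ≤ 2.0555 := by
  have h := Real.exp_bound' (x := 0.72) (by norm_num) (by norm_num) (n := 4) (by norm_num)
  simp [Finset.sum_range_succ, Nat.factorial] at h
  norm_num at h
  linarith

lemma exp0745 : 2.1058 ≤ Real.exp 0.745 := by
  have h := Real.exp_bound (x := 0.745) (by rw [abs_of_nonneg (by norm_num)]; norm_num) (n := 6) (by norm_num)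
  have h' := (abs_sub_le_iff.1 h).2
  rw [abs_of_nonneg (by norm_num : (0:ℝ) ≤ 0.745)] at h'
  simp [Finset.sum_range_succ, Nat.factorial] at h'
  norm_num at h'
  linarith

lemma logA_ub : Real.log (19/40) ≤ -0.72 := by
  have h : (0.72:ℝ) ≤ Real.log (40/19) := by
    rw [Real.le_log_iff_exp_le (by norm_num)]
    calc Real.exp 0.72 ≤ 2.0555 := exp072
      _ ≤ 40/19 := by norm_num
  have e : ((19:ℝ)/40) = (40/19)⁻¹ := by norm_num
  rw [e, Real.log_inv]; linarith

lemma logA_lb : -0.745 ≤ Real.log (19/40) := by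
  have h : Real.log (40/19) ≤ 0.745 := by
    rw [Real.log_le_iff_le_exp (by norm_num)]
    calc (40:ℝ)/19 ≤ 2.1058 := by norm_num
      _ ≤ Real.exp 0.745 := exp0745
  have e : ((19:ℝ)/40) = (40/19)⁻¹ := by norm_num
  rw [e, Real.log_inv]; linarith

lemma rpow_pow5 {x : ℝ} (hx : 0 < x) (k : ℕ) : (x ^ ((k:ℝ)/5)) ^ (5:ℕ) = x ^ k := by
  rw [← Real.rpow_natCast (x ^ ((k:ℝ)/5)) 5, ← Real.rpow_mul hx.le,
      show (k:ℝ)/5 * ((5:ℕ):ℝ) = ((k:ℕ):ℝ) by push_cast; ring, Real.rpow_natCast]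

lemma rpow5_le {x r : ℝ} (hx : 0 < x) (hr : 0 ≤ r) (k : ℕ) (h : x ^ k ≤ r ^ 5) :
    x ^ ((k:ℝ)/5) ≤ r := by
  refine le_of_pow_le_pow_left₀ (n := 5) (by norm_num) hr ?_
  rw [rpow_pow5 hx k]; exact h

lemma le_rpow5 {x r : ℝ} (hx : 0 < x) (k : ℕ) (h : r ^ 5 ≤ x ^ k) :
    r ≤ x ^ ((k:ℝ)/5) := by
  refine le_of_pow_le_pow_left₀ (n := 5) (by norm_num) (Real.rpow_nonneg hx.le _) ?_
  rw [rpow_pow5 hx k]; exact h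

set_option maxHeartbeats 1000000 in
theorem numeric_ineq_pos (p : ℝ) (hp0 : 0 < p) (hp : p < 0.4) :
    ((1/2 - 1/40 : ℝ)) ^ p + ((1/2 : ℝ)) ^ p ≥ 1 + ((2/11.33 : ℝ)) ^ p := by
  have ea : ((1/2 - 1/40 : ℝ)) = (19/40 : ℝ) := by norm_num
  have ec : ((2/11.33 : ℝ)) = (200/1133 : ℝ) := by norm_num
  rw [ea, ec]
  set A := Real.log (19/40) with hA
  set B := Real.log (1/2) with hB
  set C := Real.log (200/1133) with hC
  have hA1 : -0.745 ≤ A := logA_lb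
  have hA2 : A ≤ -0.72 := logA_ub
  have hB' : B = -Real.log 2 := by rw [hB, one_div, Real.log_inv]
  have hB1 : -0.6931471808 ≤ B := by
    rw [hB']; have := Real.log_two_lt_d9; linarith
  have hB2 : B ≤ -0.6931471803 := by
    rw [hB']; have := Real.log_two_gt_d9; linarith
  have hp4 : p < 2/5 := by linarith [hp]
  have hra : ((19:ℝ)/40) ^ p = Real.exp (A * p) := Real.rpow_def_of_pos (by norm_num) p
  have hrb : ((1:ℝ)/2) ^ p = Real.exp (B * p) := Real.rpow_def_of_pos (by norm_num) p
  have hrc : ((200:ℝ)/1133) ^ p = Real.exp (C * p) := Real.rpow_def_of_pos (by norm_num) p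
  rw [hra, hrb, hrc]
  -- fifth-root numeric bounds
  have hX1 : ((200:ℝ)/1133) ^ ((1:ℝ)/5) ≤ 0.707 := by
    have := rpow5_le (x := (200:ℝ)/1133) (by norm_num) (by norm_num : (0:ℝ) ≤ 0.707) 1 (by norm_num)
    simpa using this
  have hX1e : ((200:ℝ)/1133) ^ ((1:ℝ)/5) = Real.exp (C * (1/5)) :=
    Real.rpow_def_of_pos (by norm_num) _
  have hX2 : ((200:ℝ)/1133) ^ ((2:ℝ)/5) ≤ 0.49976 := by
    have := rpow5_le (x := (200:ℝ)/1133) (by norm_num) (by norm_num : (0:ℝ) ≤ 0.49976) 2 (by norm_num)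
    simpa using this
  have hX2e : ((200:ℝ)/1133) ^ ((2:ℝ)/5) = Real.exp (C * (2/5)) :=
    Real.rpow_def_of_pos (by norm_num) _
  have hYa : (0.7424:ℝ) ≤ ((19:ℝ)/40) ^ ((2:ℝ)/5) := by
    have := le_rpow5 (x := (19:ℝ)/40) (by norm_num) 2 (r := 0.7424) (by norm_num)
    simpa using this
  have hYae : ((19:ℝ)/40) ^ ((2:ℝ)/5) = Real.exp (A * (2/5)) :=
    Real.rpow_def_of_pos (by norm_num) _
  have hYb : (0.757857:ℝ) ≤ ((1:ℝ)/2) ^ ((2:ℝ)/5) := by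
    have := le_rpow5 (x := (1:ℝ)/2) (by norm_num) 2 (r := 0.757857) (by norm_num)
    simpa using this
  have hYbe : ((1:ℝ)/2) ^ ((2:ℝ)/5) = Real.exp (B * (2/5)) :=
    Real.rpow_def_of_pos (by norm_num) _
  set X1 := Real.exp (C * (1/5)) with hX1d
  set X2 := Real.exp (C * (2/5)) with hX2d
  rw [hX1e] at hX1
  rw [hX2e] at hX2
  rw [hYae] at hYa
  rw [hYbe] at hYb
  rcases le_or_gt p (1/5) with hcut | hcut
  · -- region 1 : 0 < p ≤ 1/5
    have hta1 : -0.745 * p ≤ A * p := mul_le_mul_of_nonneg_right hA1 hp0.le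
    have hta2 : A * p ≤ 0 := mul_nonpos_of_nonpos_of_nonneg (by linarith) hp0.le
    have htb1 : -0.6931471808 * p ≤ B * p := mul_le_mul_of_nonneg_right hB1 hp0.le
    have htb2 : B * p ≤ 0 := mul_nonpos_of_nonpos_of_nonneg (by linarith) hp0.le
    have ha : 1 + A * p + (A*p) ^ 2 / 2 + (2/9) * (A*p) ^ 3 ≤ Real.exp (A * p) :=
      exp_cubic_lb (by linarith) hta2
    have hb : 1 + B * p + (B*p) ^ 2 / 2 + (2/9) * (B*p) ^ 3 ≤ Real.exp (B * p) :=
      exp_cubic_lb (by linarith) htb2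
    have hcuba : (0.149:ℝ) ^ 2 * (A * p) ≤ (A * p) ^ 3 :=
      cube_lb (by linarith) hta2
    have hcubb : (0.139:ℝ) ^ 2 * (B * p) ≤ (B * p) ^ 3 :=
      cube_lb (by linarith) htb2
    have hchord : Real.exp (C * p) ≤ (1 - 5*p) * 1 + (5*p) * X1 := by
      have h := convexOn_exp.2 (Set.mem_univ (0:ℝ)) (Set.mem_univ (C * (1/5)))
        (show (0:ℝ) ≤ 1 - 5*p by linarith) (show (0:ℝ) ≤ 5*p by linarith)
        (show (1 - 5*p) + 5*p = 1 by ring)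
      simp only [smul_eq_mul] at h
      rw [show (1 - 5*p) * 0 + 5*p*(C*(1/5)) = C * p by ring, Real.exp_zero] at h
      exact h
    have hX1p : (5*p) * X1 ≤ (5*p) * 0.707 :=
      mul_le_mul_of_nonneg_left hX1 (by linarith)
    linarith only [ha, hb, hcuba, hcubb, hta1, htb1, hchord, hX1p, sq_nonneg (A*p), sq_nonneg (B*p), hp0.le, hcut]
  · -- region 2 : 1/5 ≤ p < 2/5
    have hq0 : (0:ℝ) ≤ 2/5 - p := by linarith
    have ha : Real.exp (A * (2/5)) * (1 + A * (p - 2/5)) ≤ Real.exp (A * p) := by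
      have h1 : 1 + A * (p - 2/5) ≤ Real.exp (A * (p - 2/5)) := by
        have := Real.add_one_le_exp (A * (p - 2/5)); linarith
      have h2 := mul_le_mul_of_nonneg_left h1 (Real.exp_pos (A * (2/5))).le
      calc Real.exp (A * (2/5)) * (1 + A * (p - 2/5))
          ≤ Real.exp (A * (2/5)) * Real.exp (A * (p - 2/5)) := h2
        _ = Real.exp (A * p) := by rw [← Real.exp_add]; ring_nf
    have hb : Real.exp (B * (2/5)) * (1 + B * (p - 2/5)) ≤ Real.exp (B * p) := by
      have h1 : 1 + B * (p - 2/5) ≤ Real.exp (B * (p - 2/5)) := by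
        have := Real.add_one_le_exp (B * (p - 2/5)); linarith
      have h2 := mul_le_mul_of_nonneg_left h1 (Real.exp_pos (B * (2/5))).le
      calc Real.exp (B * (2/5)) * (1 + B * (p - 2/5))
          ≤ Real.exp (B * (2/5)) * Real.exp (B * (p - 2/5)) := h2
        _ = Real.exp (B * p) := by rw [← Real.exp_add]; ring_nf
    have hchord : Real.exp (C * p) ≤ (2 - 5*p) * X1 + (5*p - 1) * X2 := by
      have h := convexOn_exp.2 (Set.mem_univ (C * (1/5))) (Set.mem_univ (C * (2/5)))
        (show (0:ℝ) ≤ 2 - 5*p by linarith) (show (0:ℝ) ≤ 5*p - 1 by linarith)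
        (show (2 - 5*p) + (5*p - 1) = 1 by ring)
      simp only [smul_eq_mul] at h
      rw [show (2 - 5*p) * (C * (1/5)) + (5*p - 1) * (C * (2/5)) = C * p by ring] at h
      exact h
    set Ya := Real.exp (A * (2/5)) with hYad
    set Yb := Real.exp (B * (2/5)) with hYbd
    have hPA : (0.7424:ℝ) * 0.72 ≤ Ya * (-A) := by
      have := mul_le_mul hYa (by linarith : (0.72:ℝ) ≤ -A) (by norm_num) (by linarith)
      linarith
    have hPB : (0.757857:ℝ) * 0.6931471803 ≤ Yb * (-B) := by
      have := mul_le_mul hYb (by linarith : (0.6931471803:ℝ) ≤ -B) (by norm_num) (by linarith)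
      linarith
    have f1 : (2/5 - p) * ((0.7424:ℝ) * 0.72) ≤ (2/5 - p) * (Ya * (-A)) :=
      mul_le_mul_of_nonneg_left hPA hq0
    have f2 : (2/5 - p) * ((0.757857:ℝ) * 0.6931471803) ≤ (2/5 - p) * (Yb * (-B)) :=
      mul_le_mul_of_nonneg_left hPB hq0
    have f3 : (2 - 5*p) * X1 ≤ (2 - 5*p) * 0.707 :=
      mul_le_mul_of_nonneg_left hX1 (by linarith)
    have f4 : (5*p - 1) * X2 ≤ (5*p - 1) * 0.49976 :=
      mul_le_mul_of_nonneg_left hX2 (by linarith)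
    linarith only [ha, hb, hchord, hYa, hYb, f1, f2, f3, f4, hq0, hcut, hp4]
end

section
/- Let v : Set G → ℝ≥0 be a subadditive, monotone set function with v(∅) = 0 on a finite set G of goods, and let S ⊆ G be a finite set with v(S) ≥ F/3 for some F > 0. Suppose every singleton g ∈ S satisfies v({g}) ≤ F/3.53. Then there exists a subset T ⊆ S such that F/20 ≤ v(T) ≤ F/3 and v(S \ T) ≥ v(S) − F/3. -/
lemma extract_aux {G : Type*} [DecidableEq G]
    (v : Finset G → ℝ) (F : ℝ) (hF : 0 < F)
    (hempty : v ∅ = 0)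
    (hmono : ∀ A B : Finset G, A ⊆ B → v A ≤ v B)
    (hsubadd : ∀ A B : Finset G, v (A ∪ B) ≤ v A + v B) :
    ∀ n (S : Finset G), S.card ≤ n → v S ≥ F / 3 →
      (∀ g ∈ S, v {g} ≤ F / 3.53) →
      ∃ T ⊆ S, F / 20 ≤ v T ∧ v T ≤ F / 3 := by
  intro n
  induction n with
  | zero =>
    intro S hcard hS _
    rw [Finset.card_eq_zero.mp (Nat.le_zero.mp hcard)] at hS
    rw [hempty] at hS
    linarith
  | succ n ih =>
    intro S hcard hS hsmall
    by_cases hle : v S ≤ F / 3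
    · exact ⟨S, Finset.Subset.refl S, by linarith, hle⟩
    · push_neg at hle
      have hne : S.Nonempty := by
        rcases S.eq_empty_or_nonempty with h | h
        · rw [h, hempty] at hle; linarith
        · exact h
      obtain ⟨g, hg⟩ := hne
      by_cases h' : F / 3 ≤ v (S.erase g)
      · have hcard' : (S.erase g).card ≤ n := by
          have := Finset.card_erase_of_mem hg
          omega
        obtain ⟨T, hT, h1, h2⟩ := ih (S.erase g) hcard' h'
          (fun x hx => hsmall x (Finset.mem_of_mem_erase hx))
        exact ⟨T, hT.trans (Finset.erase_subset g S), h1, h2⟩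
      · push_neg at h'
        refine ⟨S.erase g, Finset.erase_subset g S, ?_, le_of_lt h'⟩
        have hins : insert g (S.erase g) = S := Finset.insert_erase hg
        have hsplit : v S ≤ v {g} + v (S.erase g) := by
          calc v S = v ({g} ∪ S.erase g) := by
                rw [show ({g} ∪ S.erase g : Finset G) = S by rw [← hins]; ext x; simp]
            _ ≤ v {g} + v (S.erase g) := hsubadd _ _
        have hg' := hsmall g hg
        have h353 : v {g} ≤ F * (100 / 353) := by
          rw [show (3.53:ℝ) = 353/100 by norm_num] at hg'
          linarith [hg']
        nlinarith [h353]

theorem extract_one_bundle {G : Type*} [Fintype G] [DecidableEq G]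
    (v : Finset G → ℝ) (F : ℝ) (hF : 0 < F)
    (hempty : v ∅ = 0)
    (hmono : ∀ A B : Finset G, A ⊆ B → v A ≤ v B)
    (hsubadd : ∀ A B : Finset G, v (A ∪ B) ≤ v A + v B)
    (S : Finset G) (hS : v S ≥ F / 3)
    (hsmall : ∀ g ∈ S, v {g} ≤ F / 3.53) :
    ∃ T ⊆ S, F / 20 ≤ v T ∧ v T ≤ F / 3 ∧ v (S \ T) ≥ v S - F / 3 := by
  obtain ⟨T, hT, h1, h2⟩ := extract_aux v F hF hempty hmono hsubadd S.card S le_rfl hS hsmall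
  refine ⟨T, hT, h1, h2, ?_⟩
  have : v S ≤ v T + v (S \ T) := by
    calc v S = v (T ∪ (S \ T)) := by rw [Finset.union_sdiff_of_subset hT]
      _ ≤ v T + v (S \ T) := hsubadd _ _
  linarith
end

section
/- Let v be a monotone, subadditive set function with v(∅)=0 on a finite set of goods, let S be a finite set of goods with v(S) ≥ F/3 for some F > 0, and suppose every good g ∈ S has v({g}) ≤ F/3.53. Then there exist pairwise disjoint subsets T_1, ..., T_k of S (whose union is contained in S) with k ≥ 3·v(S)/F − 1, such that v(T_j) ≥ F/20 for every j. -/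
lemma split_aux {G : Type*} [Fintype G] [DecidableEq G]
    (v : Finset G → ℝ) (F : ℝ) (hF : 0 < F)
    (hempty : v ∅ = 0)
    (hmono : ∀ A B : Finset G, A ⊆ B → v A ≤ v B)
    (hsubadd : ∀ A B : Finset G, v (A ∪ B) ≤ v A + v B) :
    ∀ (n : ℕ) (S : Finset G), S.card ≤ n → (∀ g ∈ S, v {g} ≤ F / 3.53) →
    ∃ (k : ℕ) (T : Fin k → Finset G),
      (∀ j, T j ⊆ S) ∧
      (∀ j j', j ≠ j' → Disjoint (T j) (T j')) ∧
      (∀ j, v (T j) ≥ F / 20) ∧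
      v S < k * (F / 20 + F / 3.53) + F / 20 := by
  intro n
  induction n with
  | zero =>
    intro S hcard _
    have hSe : S = ∅ := Finset.card_eq_zero.mp (Nat.le_zero.mp hcard)
    refine ⟨0, Fin.elim0, ?_, ?_, ?_, ?_⟩
    · exact fun j => j.elim0
    · exact fun j => j.elim0
    · exact fun j => j.elim0
    · subst hSe; rw [hempty]; push_cast; nlinarith
  | succ n ih =>
    intro S hcard hsmall
    by_cases hlow : v S < F / 20
    · refine ⟨0, Fin.elim0, fun j => j.elim0, fun j => j.elim0, fun j => j.elim0, ?_⟩
      push_cast; nlinarith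
    push_neg at hlow
    -- pick a minimal-cardinality subset of S with value ≥ F/20
    have hSP : S ∈ (S.powerset.filter (fun A => F / 20 ≤ v A)) :=
      Finset.mem_filter.mpr ⟨Finset.mem_powerset_self S, hlow⟩
    obtain ⟨T0, hT0mem, hT0min⟩ :=
      Finset.exists_min_image _ Finset.card ⟨S, hSP⟩
    rw [Finset.mem_filter, Finset.mem_powerset] at hT0mem
    obtain ⟨hT0S, hT0v⟩ := hT0mem
    have hT0ne : T0 ≠ ∅ := by
      intro h; rw [h, hempty] at hT0v; nlinarith
    obtain ⟨g, hg⟩ := Finset.nonempty_iff_ne_empty.mpr hT0ne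
    have herase : v (T0.erase g) < F / 20 := by
      by_contra h
      push_neg at h
      have hmem : T0.erase g ∈ S.powerset.filter (fun A => F / 20 ≤ v A) := by
        rw [Finset.mem_filter, Finset.mem_powerset]
        exact ⟨(Finset.erase_subset g T0).trans hT0S, h⟩
      have := hT0min _ hmem
      have hlt : (T0.erase g).card < T0.card := Finset.card_erase_lt_of_mem hg
      omega
    have hT0val : v T0 ≤ F / 20 + F / 3.53 := by
      have h1 : T0 = T0.erase g ∪ {g} := by
        rw [Finset.union_comm, ← Finset.insert_eq, Finset.insert_erase hg]
      calc v T0 = v (T0.erase g ∪ {g}) := by rw [← h1]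
        _ ≤ v (T0.erase g) + v {g} := hsubadd _ _
        _ ≤ F / 20 + F / 3.53 := by
            have := hsmall g (hT0S hg)
            linarith
    -- apply IH to S \ T0
    have hcard' : (S \ T0).card ≤ n := by
      have h1 : (S \ T0).card = S.card - T0.card := Finset.card_sdiff_of_subset hT0S
      have h2 : 1 ≤ T0.card := Finset.card_pos.mpr ⟨g, hg⟩
      omega
    obtain ⟨k, T, hTsub, hTdisj, hTval, hTbound⟩ :=
      ih (S \ T0) hcard' (fun g hgm => hsmall g (Finset.mem_sdiff.mp hgm).1)
    refine ⟨k + 1, Fin.cons T0 T, ?_, ?_, ?_, ?_⟩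
    · intro j
      refine Fin.cases ?_ ?_ j
      · exact hT0S
      · intro i
        exact (hTsub i).trans (Finset.sdiff_subset)
    · intro j j' hne
      induction j using Fin.cases with
      | zero =>
        induction j' using Fin.cases with
        | zero => exact absurd rfl hne
        | succ i' =>
          simp only [Fin.cons_zero, Fin.cons_succ]
          exact (Finset.sdiff_disjoint.mono_left (hTsub i')).symm
      | succ i =>
        induction j' using Fin.cases with
        | zero =>
          simp only [Fin.cons_zero, Fin.cons_succ]
          exact Finset.sdiff_disjoint.mono_left (hTsub i)
        | succ i' =>
          simp only [Fin.cons_succ]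
          exact hTdisj i i' (fun h => hne (by rw [h]))
    · intro j
      refine Fin.cases ?_ ?_ j
      · exact hT0v
      · exact hTval
    · have hsplit : v S ≤ v T0 + v (S \ T0) := by
        have : S = T0 ∪ (S \ T0) := (Finset.union_sdiff_of_subset hT0S).symm
        calc v S = v (T0 ∪ (S \ T0)) := by rw [← this]
          _ ≤ v T0 + v (S \ T0) := hsubadd _ _
      push_cast
      nlinarith

theorem split_high_value_bundle {G : Type*} [Fintype G] [DecidableEq G]
    (v : Finset G → ℝ) (F : ℝ) (hF : 0 < F)
    (hempty : v ∅ = 0)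
    (hmono : ∀ A B : Finset G, A ⊆ B → v A ≤ v B)
    (hsubadd : ∀ A B : Finset G, v (A ∪ B) ≤ v A + v B)
    (S : Finset G) (hS : v S ≥ F / 3)
    (hsmall : ∀ g ∈ S, v {g} ≤ F / 3.53) :
    ∃ (k : ℕ) (T : Fin k → Finset G),
      (∀ j, T j ⊆ S) ∧
      (∀ j j', j ≠ j' → Disjoint (T j) (T j')) ∧
      (k : ℝ) ≥ 3 * v S / F - 1 ∧
      (∀ j, v (T j) ≥ F / 20) := by
  obtain ⟨k, T, hsub, hdisj, hval, hbound⟩ :=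
    split_aux v F hF hempty hmono hsubadd S.card S le_rfl hsmall
  refine ⟨k, T, hsub, hdisj, ?_, hval⟩
  have hk : (0:ℝ) ≤ (k:ℝ) := Nat.cast_nonneg k
  rw [ge_iff_le, sub_le_iff_le_add, div_le_iff₀ hF]
  norm_num at hbound ⊢
  nlinarith
end

section
/- Let v be a monotone, subadditive set function on a finite set of goods with v(∅)=0, let U be a nonempty finite index set, and let (S_i)_{i∈U} be a partition of the goods with average value F := (1/|U|) Σ_i v(S_i). Suppose every good g satisfies v({g}) ≤ F/3.53. Then there exist |U| pairwise disjoint subsets B_1, ..., B_{|U|} of the goods such that v(B_a) ≥ F/20 for every a. -/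
/-- Extraction: from any set of value at least `F/20`, extract a piece of value
in `[F/20, F/20 + F/3.53]`. -/
lemma alglow_extract {G : Type*} [DecidableEq G] (v : Finset G → ℝ)
    (hempty : v ∅ = 0)
    (hmono : ∀ A B : Finset G, A ⊆ B → v A ≤ v B)
    (hsubadd : ∀ A B : Finset G, v (A ∪ B) ≤ v A + v B)
    (F : ℝ) (hF : 0 < F)
    (hsmall : ∀ g : G, v {g} ≤ F / 3.53)
    (T : Finset G) (hT : F / 20 ≤ v T) :
    ∃ B : Finset G, B ⊆ T ∧ F / 20 ≤ v B ∧ v B ≤ F / 20 + F / 3.53 := by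
  classical
  set s : Finset (Finset G) := T.powerset.filter (fun B => F / 20 ≤ v B) with hs
  have hTs : T ∈ s := by
    simp [hs, Finset.mem_filter, Finset.mem_powerset, hT]
  obtain ⟨B, hBs, hBmin⟩ := s.exists_min_image (fun B => B.card) ⟨T, hTs⟩
  have hBT : B ⊆ T := by
    have := (Finset.mem_filter.mp hBs).1; exact Finset.mem_powerset.mp this
  have hB1 : F / 20 ≤ v B := (Finset.mem_filter.mp hBs).2
  have hBne : B.Nonempty := by
    rcases B.eq_empty_or_nonempty with rfl | h
    · rw [hempty] at hB1; exfalso; linarith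
    · exact h
  obtain ⟨g, hg⟩ := hBne
  have herase : ¬ (F / 20 ≤ v (B.erase g)) := by
    intro hcon
    have hmem : B.erase g ∈ s := by
      simp only [hs, Finset.mem_filter, Finset.mem_powerset]
      exact ⟨(B.erase_subset g).trans hBT, hcon⟩
    have hle := hBmin _ hmem
    have hlt : (B.erase g).card < B.card := Finset.card_erase_lt_of_mem hg
    omega
  push_neg at herase
  refine ⟨B, hBT, hB1, ?_⟩
  have hBeq : {g} ∪ B.erase g = B := by
    rw [← Finset.insert_eq, Finset.insert_erase hg]
  have := hsubadd {g} (B.erase g)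
  rw [hBeq] at this
  have := hsmall g
  linarith

/-- Pieces lemma: from value at least `F/20 + n*(F/20+F/3.53)` extract `n+1`
pairwise disjoint pieces each of value at least `F/20`. -/
lemma alglow_pieces {G : Type*} [DecidableEq G] (v : Finset G → ℝ)
    (hempty : v ∅ = 0)
    (hmono : ∀ A B : Finset G, A ⊆ B → v A ≤ v B)
    (hsubadd : ∀ A B : Finset G, v (A ∪ B) ≤ v A + v B)
    (F : ℝ) (hF : 0 < F)
    (hsmall : ∀ g : G, v {g} ≤ F / 3.53) :
    ∀ (n : ℕ) (T : Finset G), F / 20 + n * (F / 20 + F / 3.53) ≤ v T →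
    ∃ P : Fin (n + 1) → Finset G, (∀ m, P m ⊆ T) ∧ (∀ m, F / 20 ≤ v (P m)) ∧
      (∀ m m', m ≠ m' → Disjoint (P m) (P m')) := by
  intro n
  induction n with
  | zero =>
    intro T hT
    obtain ⟨B, hBT, hB1, _⟩ := alglow_extract v hempty hmono hsubadd F hF hsmall T
      (by push_cast at hT; linarith)
    exact ⟨fun _ => B, fun _ => hBT, fun _ => hB1,
      fun m m' h => absurd (by omega : m = m') h⟩
  | succ n ih =>
    intro T hT
    have hc0 : 0 ≤ F / 20 + F / 3.53 := by positivity
    have hT0 : F / 20 ≤ v T := by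
      have : (0:ℝ) ≤ ((n:ℝ)+1) * (F / 20 + F / 3.53) := by positivity
      push_cast at hT; linarith
    obtain ⟨B, hBT, hB1, hB2⟩ :=
      alglow_extract v hempty hmono hsubadd F hF hsmall T hT0
    have hrem : F / 20 + n * (F / 20 + F / 3.53) ≤ v (T \ B) := by
      have hsub := hsubadd (T \ B) B
      rw [Finset.sdiff_union_of_subset hBT] at hsub
      push_cast at hT
      linarith
    obtain ⟨P', h1, h2, h3⟩ := ih (T \ B) hrem
    have hkey : ∀ j : Fin (n + 1), Disjoint B (P' j) := fun j =>
      (Finset.disjoint_sdiff).mono_right (h1 j)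
    refine ⟨Fin.cons B P', ?_, ?_, ?_⟩
    · intro m
      rcases Fin.eq_zero_or_eq_succ m with rfl | ⟨j, rfl⟩
      · simpa using hBT
      · simp only [Fin.cons_succ]
        exact (h1 j).trans Finset.sdiff_subset
    · intro m
      rcases Fin.eq_zero_or_eq_succ m with rfl | ⟨j, rfl⟩
      · simpa using hB1
      · simpa using h2 j
    · intro m m' hne
      rcases Fin.eq_zero_or_eq_succ m with rfl | ⟨i, rfl⟩ <;>
        rcases Fin.eq_zero_or_eq_succ m' with rfl | ⟨j, rfl⟩
      · exact absurd rfl hne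
      · simpa using hkey j
      · simpa using (hkey i).symm
      · simp only [Fin.cons_succ]
        exact h3 i j (fun h => hne (by rw [h]))

theorem alglow_core {G U : Type*} [Fintype G] [DecidableEq G] [Fintype U]
    [Nonempty U]
    (v : Finset G → ℝ)
    (hempty : v ∅ = 0)
    (hmono : ∀ A B : Finset G, A ⊆ B → v A ≤ v B)
    (hsubadd : ∀ A B : Finset G, v (A ∪ B) ≤ v A + v B)
    (S : U → Finset G)
    (hdisj : ∀ i j : U, i ≠ j → Disjoint (S i) (S j))
    (hcover : Finset.univ.biUnion S = Finset.univ)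
    (F : ℝ)
    (hFdef : F = (1 / (Fintype.card U) : ℝ) * ∑ i : U, v (S i))
    (hsmall : ∀ g : G, v {g} ≤ F / 3.53) :
    ∃ B : U → Finset G,
      (∀ i j : U, i ≠ j → Disjoint (B i) (B j)) ∧
      (∀ a : U, v (B a) ≥ F / 20) := by
  classical
  rcases le_or_gt F 0 with hF | hF
  · refine ⟨fun _ => ∅, fun i j _ => by simp, fun a => ?_⟩
    show F / 20 ≤ v ∅
    rw [hempty]; linarith
  -- main case : F > 0
  set c : ℝ := F / 20 + F / 3.53 with hc_def
  have hc0 : 0 < c := by rw [hc_def]; positivity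
  have hcF : c ≤ F / 3 := by
    have h353 : F / 3.53 = F * 100 / 353 := by
      rw [show (3.53:ℝ) = 353/100 by norm_num]; ring
    rw [hc_def, h353]; linarith
  have hv0 : ∀ i, 0 ≤ v (S i) := fun i => by
    have := hmono ∅ (S i) (Finset.empty_subset _); rw [hempty] at this; exact this
  have hcardU : (0:ℝ) < (Fintype.card U : ℝ) := by
    exact_mod_cast Fintype.card_pos
  have hsumv : ∑ i, v (S i) = (Fintype.card U : ℝ) * F := by
    rw [hFdef]; field_simp
  set k : U → ℕ := fun i =>
    if F / 20 ≤ v (S i) then ⌊(v (S i) - F / 20) / c⌋₊ + 1 else 0 with hk_def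
  have hk_lb : ∀ i, (3 * v (S i) / F - 2 : ℝ) ≤ k i := by
    intro i
    by_cases h : F / 20 ≤ v (S i)
    · have hk : k i = ⌊(v (S i) - F / 20) / c⌋₊ + 1 := if_pos h
      rw [hk]
      set x : ℝ := (v (S i) - F / 20) / c with hx_def
      have hx0 : 0 ≤ x := div_nonneg (by linarith) hc0.le
      have hxlt : x < (⌊x⌋₊ : ℝ) + 1 := Nat.lt_floor_add_one x
      push_cast
      by_cases h2 : 3 * v (S i) / F - 2 ≤ 0
      · linarith
      · -- need x ≥ 3 v/F - 2
        push_neg at h2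
        have hmul : c * (3 * v (S i) / F - 2) ≤ (F / 3) * (3 * v (S i) / F - 2) :=
          mul_le_mul_of_nonneg_right hcF h2.le
        have heq : (F / 3) * (3 * v (S i) / F - 2) = v (S i) - 2 * F / 3 := by
          field_simp
        have hxge : 3 * v (S i) / F - 2 ≤ x := by
          rw [hx_def, le_div_iff₀ hc0, mul_comm]
          linarith
        linarith
    · have hk : k i = 0 := if_neg h
      rw [hk]
      push_neg at h
      have : 3 * v (S i) ≤ 2 * F := by linarith
      have := (div_le_iff₀ hF).mpr (by linarith : 3 * v (S i) ≤ 2 * F)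
      push_cast
      linarith
  have hsum : Fintype.card U ≤ ∑ i, k i := by
    have h2 : ∑ i, (3 * v (S i) / F - 2 : ℝ) ≤ ∑ i, (k i : ℝ) :=
      Finset.sum_le_sum (fun i _ => hk_lb i)
    have h3 : ∑ i, (3 * v (S i) / F - 2 : ℝ) = (Fintype.card U : ℝ) := by
      rw [Finset.sum_sub_distrib, ← Finset.sum_div, ← Finset.mul_sum, hsumv,
        Finset.sum_const, Finset.card_univ, nsmul_eq_mul]
      field_simp
      ring
    have h4 : (Fintype.card U : ℝ) ≤ ∑ i, (k i : ℝ) := by rw [← h3]; exact h2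
    have h5 : ((∑ i, k i : ℕ) : ℝ) = ∑ i, (k i : ℝ) := by push_cast; rfl
    exact_mod_cast h4.trans_eq h5.symm
  -- per-part pieces
  have hP : ∀ i : U, ∃ P : Fin (k i) → Finset G, (∀ m, P m ⊆ S i) ∧
      (∀ m, F / 20 ≤ v (P m)) ∧ (∀ m m', m ≠ m' → Disjoint (P m) (P m')) := by
    intro i
    by_cases h : F / 20 ≤ v (S i)
    · have hk : k i = ⌊(v (S i) - F / 20) / c⌋₊ + 1 := if_pos h
      have hx0 : 0 ≤ (v (S i) - F / 20) / c := div_nonneg (by linarith) hc0.le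
      have hfl : (⌊(v (S i) - F / 20) / c⌋₊ : ℝ) * c ≤ v (S i) - F / 20 := by
        have := Nat.floor_le hx0
        calc (⌊(v (S i) - F / 20) / c⌋₊ : ℝ) * c ≤ ((v (S i) - F / 20) / c) * c :=
              mul_le_mul_of_nonneg_right this hc0.le
          _ = v (S i) - F / 20 := div_mul_cancel₀ _ hc0.ne'
      obtain ⟨P, h1, h2, h3⟩ := alglow_pieces v hempty hmono hsubadd F hF hsmall
        ⌊(v (S i) - F / 20) / c⌋₊ (S i) (by rw [← hc_def]; linarith)
      rw [hk]
      exact ⟨P, h1, h2, h3⟩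
    · have hk : k i = 0 := if_neg h
      rw [hk]
      exact ⟨Fin.elim0, fun m => m.elim0, fun m => m.elim0, fun m => m.elim0⟩
  choose P hP1 hP2 hP3 using hP
  have hcard : Fintype.card U ≤ Fintype.card (Σ i : U, Fin (k i)) := by
    rw [Fintype.card_sigma]
    simpa using hsum
  obtain ⟨f⟩ := Function.Embedding.nonempty_of_card_le hcard
  have key : ∀ p q : (Σ i : U, Fin (k i)), p ≠ q → Disjoint (P p.1 p.2) (P q.1 q.2) := by
    rintro ⟨a, x⟩ ⟨b, y⟩ hpq
    by_cases h : a = b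
    · subst h
      have hxy : x ≠ y := fun h' => hpq (by rw [h'])
      exact hP3 a x y hxy
    · exact Disjoint.mono (hP1 a x) (hP1 b y) (hdisj a b h)
  exact ⟨fun a => P (f a).1 (f a).2,
    fun i j hij => key _ _ (fun h => hij (f.injective h)),
    fun a => hP2 _ _⟩
end

section
/- Let a, b, c be reals with 0 < c < b ≤ a < 1, and define f(p) = a^p + b^p − 1 − c^p for real p. Then every critical point of f is a strict local maximum; that is, if f'(p₀) = 0 then f''(p₀) < 0. -/
/-! Since `d/dp x^p = x^p log x`, we have `f' = a^p log a + b^p log b - c^p log c` and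
`f'' = a^p (log a)² + b^p (log b)² - c^p (log c)²`. Eliminating `c^p log c` with `f'(p₀) = 0` gives
`f''(p₀) = a^{p₀} log a (log a - log c) + b^{p₀} log b (log b - log c)`, and both terms are
negative because `log c < log b ≤ log a < 0`. -/

open Real

theorem weighted_sq_sub_neg_of_mul_eq {u v w x y z : ℝ} (hu : 0 < u) (hv : 0 < v)
    (hx : x < 0) (hy : y < 0) (hzx : z < x) (hzy : z < y) (hcrit : w * z = u * x + v * y) :
    u * x ^ 2 + v * y ^ 2 - w * z ^ 2 < 0 := by
  have hux : u * x * (x - z) < 0 := mul_neg_of_neg_of_pos (mul_neg_of_pos_of_neg hu hx) (by linarith)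
  have hvy : v * y * (y - z) < 0 := mul_neg_of_neg_of_pos (mul_neg_of_pos_of_neg hv hy) (by linarith)
  calc u * x ^ 2 + v * y ^ 2 - w * z ^ 2 = u * x * (x - z) + v * y * (y - z) := by
        linear_combination (-z) * hcrit
    _ < 0 := by linarith

section RpowSum

variable {a b c : ℝ}

theorem deriv_rpow_add_rpow_sub_one_sub_rpow (ha : 0 < a) (hb : 0 < b) (hc : 0 < c) :
    deriv (fun p : ℝ => a ^ p + b ^ p - 1 - c ^ p)
      = fun p => a ^ p * log a + b ^ p * log b - c ^ p * log c := by
  funext p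
  have hf := (((hasStrictDerivAt_const_rpow ha p).hasDerivAt.add
    (hasStrictDerivAt_const_rpow hb p).hasDerivAt).sub_const 1).sub
    (hasStrictDerivAt_const_rpow hc p).hasDerivAt
  exact hf.deriv

theorem deriv_rpow_mul_log_add_rpow_mul_log_sub_rpow_mul_log (ha : 0 < a) (hb : 0 < b)
    (hc : 0 < c) (p : ℝ) :
    deriv (fun p : ℝ => a ^ p * log a + b ^ p * log b - c ^ p * log c) p
      = a ^ p * log a ^ 2 + b ^ p * log b ^ 2 - c ^ p * log c ^ 2 := by
  have hf := (((hasStrictDerivAt_const_rpow ha p).hasDerivAt.mul_const (log a)).add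
    ((hasStrictDerivAt_const_rpow hb p).hasDerivAt.mul_const (log b))).sub
    ((hasStrictDerivAt_const_rpow hc p).hasDerivAt.mul_const (log c))
  exact hf.deriv.trans (by ring)

end RpowSum

theorem critical_points_are_maxima (a b c : ℝ)
    (hc : 0 < c) (hcb : c < b) (hba : b ≤ a) (ha : a < 1)
    (p₀ : ℝ)
    (hcrit : deriv (fun p : ℝ => a ^ p + b ^ p - 1 - c ^ p) p₀ = 0) :
    deriv (deriv (fun p : ℝ => a ^ p + b ^ p - 1 - c ^ p)) p₀ < 0 := by
  have hb : 0 < b := hc.trans hcb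
  have ha₀ : 0 < a := hb.trans_le hba
  have hlcb : log c < log b := log_lt_log hc hcb
  have hlba : log b ≤ log a := log_le_log hb hba
  rw [deriv_rpow_add_rpow_sub_one_sub_rpow ha₀ hb hc] at hcrit ⊢
  rw [deriv_rpow_mul_log_add_rpow_mul_log_sub_rpow_mul_log ha₀ hb hc]
  exact weighted_sq_sub_neg_of_mul_eq (rpow_pos_of_pos ha₀ p₀) (rpow_pos_of_pos hb p₀)
    (log_neg ha₀ ha) (log_neg hb (hba.trans_lt ha)) (hlcb.trans_le hlba) hlcb
    (by linarith)
end

section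
/- Let v be a monotone subadditive set function with v(∅)=0, let A be a finite set of goods, and let p < 0 be real. Suppose v(A) > 0, every g ∈ A has v({g}) ≤ v(A)/40, and there is a construction splitting A into disjoint parts A'_j and A'_i = A \ A'_j with v(A'_j) ≥ v(A)/2 and v(A'_i) ≥ (1/2 − 1/40)·v(A). Then for any set B with 0 < v(B) ≤ (2/11.33)·v(A), we have v(A'_i)^p + v(A'_j)^p < v(A)^p + v(B)^p. -/
theorem exchange_neg_p {G : Type*} [Fintype G] [DecidableEq G]
    (v : Finset G → ℝ)
    (hempty : v ∅ = 0)
    (hmono : ∀ X Y : Finset G, X ⊆ Y → v X ≤ v Y)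
    (hsubadd : ∀ X Y : Finset G, v (X ∪ Y) ≤ v X + v Y)
    (p : ℝ) (hp : p < 0)
    (A : Finset G) (hA : 0 < v A)
    (hsmall : ∀ g ∈ A, v {g} ≤ v A / 40)
    (A'j A'i : Finset G) (hAj : A'j ⊆ A) (hAi : A'i = A \ A'j)
    (hvAj : v A'j ≥ v A / 2)
    (hvAi : v A'i ≥ (1/2 - 1/40) * v A)
    (B : Finset G) (hB0 : 0 < v B) (hB : v B ≤ (2/11.33) * v A) :
    v A'i ^ p + v A'j ^ p < v A ^ p + v B ^ p := by
  set t : ℝ := -p with ht_def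
  have ht : 0 < t := by simp [ht_def]; linarith
  -- key numeric inequality: (19/40)^p + (1/2)^p < 1 + (2/11.33)^p
  have h40 : (1:ℝ) ≤ (40/19:ℝ) ^ t := Real.one_le_rpow (by norm_num) ht.le
  have h2 : (1:ℝ) ≤ (2:ℝ) ^ t := Real.one_le_rpow (by norm_num) ht.le
  have hmul : ((80:ℝ)/19) ^ t = (40/19:ℝ) ^ t * (2:ℝ) ^ t := by
    rw [← Real.mul_rpow (by norm_num) (by norm_num)]; norm_num
  have hlt : ((80:ℝ)/19) ^ t < (5.665:ℝ) ^ t :=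
    Real.rpow_lt_rpow (by norm_num) (by norm_num) ht
  have hkey : (40/19:ℝ) ^ t + (2:ℝ) ^ t < 1 + (5.665:ℝ) ^ t := by
    nlinarith [mul_nonneg (sub_nonneg.2 h40) (sub_nonneg.2 h2)]
  -- rewrite in terms of p
  have conv : ∀ x : ℝ, 0 < x → x ^ p = (x⁻¹) ^ t := by
    intro x hx
    rw [Real.inv_rpow hx.le, ← Real.rpow_neg hx.le, ht_def, neg_neg]
  have hkey' : (19/40:ℝ) ^ p + (1/2:ℝ) ^ p < 1 + (2/11.33:ℝ) ^ p := by
    rw [conv _ (by norm_num), conv _ (by norm_num), conv _ (by norm_num)]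
    have e1 : ((19:ℝ)/40)⁻¹ = 40/19 := by norm_num
    have e2 : ((1:ℝ)/2)⁻¹ = 2 := by norm_num
    have e3 : ((2:ℝ)/11.33)⁻¹ = 5.665 := by norm_num
    rw [e1, e2, e3]; exact hkey
  -- bounds via antitonicity of x ↦ x^p
  have h19 : (19/40:ℝ) * v A ≤ v A'i := by linarith [hvAi]
  have h12 : (1/2:ℝ) * v A ≤ v A'j := by linarith [hvAj]
  have hAi' : v A'i ^ p ≤ ((19/40:ℝ) * v A) ^ p :=
    Real.rpow_le_rpow_of_nonpos (by positivity) h19 hp.le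
  have hAj' : v A'j ^ p ≤ ((1/2:ℝ) * v A) ^ p :=
    Real.rpow_le_rpow_of_nonpos (by positivity) h12 hp.le
  have hB' : ((2/11.33:ℝ) * v A) ^ p ≤ v B ^ p :=
    Real.rpow_le_rpow_of_nonpos hB0 hB hp.le
  have m1 : ((19/40:ℝ) * v A) ^ p = (19/40:ℝ) ^ p * v A ^ p :=
    Real.mul_rpow (by norm_num) hA.le
  have m2 : ((1/2:ℝ) * v A) ^ p = (1/2:ℝ) ^ p * v A ^ p :=
    Real.mul_rpow (by norm_num) hA.le
  have m3 : ((2/11.33:ℝ) * v A) ^ p = (2/11.33:ℝ) ^ p * v A ^ p :=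
    Real.mul_rpow (by norm_num) hA.le
  have hvp : 0 < v A ^ p := Real.rpow_pos_of_pos hA p
  have mid : ((19/40:ℝ) ^ p + (1/2:ℝ) ^ p) * v A ^ p
      < (1 + (2/11.33:ℝ) ^ p) * v A ^ p :=
    mul_lt_mul_of_pos_right hkey' hvp
  calc v A'i ^ p + v A'j ^ p
      ≤ (19/40:ℝ) ^ p * v A ^ p + (1/2:ℝ) ^ p * v A ^ p := by
        rw [← m1, ← m2]; exact add_le_add hAi' hAj'
    _ < v A ^ p + (2/11.33:ℝ) ^ p * v A ^ p := by nlinarith [mid]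
    _ ≤ v A ^ p + v B ^ p := by rw [← m3]; linarith [hB']
end

section
/- Let v be a monotone subadditive set function with v(∅)=0 on a finite set of goods, let A be a finite set with v(A) > 0 such that every g ∈ A satisfies v({g}) ≤ v(A)/40. Then A can be partitioned into two disjoint sets A₁ and A₂ with v(A₁) ≥ (1/2 − 1/40)·v(A) and v(A₂) ≥ v(A)/2. -/
/-!
Take a subset `S ⊆ A` of minimum cardinality with `v S ≥ v(A)/2`. Removing any good `g` from `S`
drops its value below `v(A)/2`, so by subadditivity `v S < v(A)/2 + v {g} ≤ v(A)/2 + v(A)/40`.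
Then `A₂ = S` and `A₁ = A \ S` work, since `v A ≤ v (A \ S) + v S`.
-/

namespace Finset

variable {α β : Type*} [DecidableEq α]

theorem exists_subset_le_forall_erase_lt [LinearOrder β] (f : Finset α → β) {A : Finset α}
    {t : β} (hA : t ≤ f A) : ∃ S ⊆ A, t ≤ f S ∧ ∀ g ∈ S, f (S.erase g) < t := by
  obtain ⟨S, hS, hmin⟩ := (A.powerset.filter (t ≤ f ·)).exists_min_image card
    ⟨A, mem_filter.2 ⟨mem_powerset_self A, hA⟩⟩
  obtain ⟨hSA, htS⟩ := mem_filter.1 hS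
  refine ⟨S, mem_powerset.1 hSA, htS, fun g hg => lt_of_not_ge fun hle => ?_⟩
  have hmem : S.erase g ∈ A.powerset.filter (t ≤ f ·) :=
    mem_filter.2 ⟨mem_powerset.2 ((erase_subset g S).trans (mem_powerset.1 hSA)), hle⟩
  exact (card_erase_lt_of_mem hg).not_ge (hmin _ hmem)

section Subadditive

variable {v : Finset α → ℝ} (hsubadd : ∀ X Y : Finset α, v (X ∪ Y) ≤ v X + v Y)
include hsubadd

theorem le_erase_add_singleton {S : Finset α} {g : α} (hg : g ∈ S) :
    v S ≤ v (S.erase g) + v {g} := by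
  calc v S = v ({g} ∪ S.erase g) := by rw [← insert_eq, insert_erase hg]
    _ ≤ v {g} + v (S.erase g) := hsubadd _ _
    _ = v (S.erase g) + v {g} := add_comm _ _

theorem le_sdiff_add_of_subset {S A : Finset α} (hSA : S ⊆ A) : v A ≤ v (A \ S) + v S := by
  calc v A = v (A \ S ∪ S) := by rw [sdiff_union_of_subset hSA]
    _ ≤ v (A \ S) + v S := hsubadd _ _

theorem exists_subset_le_lt_add {A : Finset α} {t ε : ℝ} (hempty : v ∅ < t) (htA : t ≤ v A)
    (hsmall : ∀ g ∈ A, v {g} ≤ ε) : ∃ S ⊆ A, t ≤ v S ∧ v S < t + ε := by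
  obtain ⟨S, hSA, htS, herase⟩ := exists_subset_le_forall_erase_lt v htA
  obtain ⟨g, hg⟩ : S.Nonempty := nonempty_iff_ne_empty.2 fun h => (h ▸ htS).not_gt hempty
  refine ⟨S, hSA, htS, ?_⟩
  linarith [le_erase_add_singleton hsubadd hg, herase g hg, hsmall g (hSA hg)]

end Subadditive

end Finset

theorem split_in_half_general {G : Type*} [DecidableEq G]
    (v : Finset G → ℝ)
    (hempty : v ∅ = 0)
    (hsubadd : ∀ X Y : Finset G, v (X ∪ Y) ≤ v X + v Y)
    (A : Finset G) (hA : 0 < v A)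
    (hsmall : ∀ g ∈ A, v {g} ≤ v A / 40) :
    ∃ A₁ A₂ : Finset G, A₁ ∪ A₂ = A ∧ Disjoint A₁ A₂ ∧
      v A₁ ≥ (1/2 - 1/40) * v A ∧ v A₂ ≥ v A / 2 := by
  obtain ⟨S, hSA, hhalf, hS⟩ := Finset.exists_subset_le_lt_add hsubadd
    (by linarith : v ∅ < v A / 2) (by linarith) hsmall
  refine ⟨A \ S, S, Finset.sdiff_union_of_subset hSA, Finset.sdiff_disjoint, ?_, hhalf⟩
  linarith [Finset.le_sdiff_add_of_subset hsubadd hSA]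

theorem split_in_half {G : Type*} [Fintype G] [DecidableEq G]
    (v : Finset G → ℝ)
    (hempty : v ∅ = 0)
    (hmono : ∀ X Y : Finset G, X ⊆ Y → v X ≤ v Y)
    (hsubadd : ∀ X Y : Finset G, v (X ∪ Y) ≤ v X + v Y)
    (A : Finset G) (hA : 0 < v A)
    (hsmall : ∀ g ∈ A, v {g} ≤ v A / 40) :
    ∃ A₁ A₂ : Finset G, A₁ ∪ A₂ = A ∧ Disjoint A₁ A₂ ∧
      v A₁ ≥ (1/2 - 1/40) * v A ∧ v A₂ ≥ v A / 2 :=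
  split_in_half_general v hempty hsubadd A hA hsmall
end

section
/- In the 3DM reduction with valuation v(S) = max_i |S ∩ E_i| over 3-uniform hyperedges on 3q vertices: if every matching in the hypergraph has size at most α·q (for 0 < α < 1), then every q-partition (A_1, ..., A_q) of the vertices has arithmetic-mean welfare (1/q)·Σ_i v(A_i) ≤ 2 + α. -/
theorem tdm_no_instance {V : Type*} [Fintype V] [DecidableEq V]
    (q T : ℕ) (hq : 0 < q)
    (hcardV : Fintype.card V = 3 * q)
    (E : Fin T → Finset V)
    (hE3 : ∀ i, (E i).card = 3)
    (v : Finset V → ℕ)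
    (hv : ∀ S : Finset V, v S = Finset.univ.sup (fun i : Fin T => (S ∩ E i).card))
    (α : ℝ) (hα0 : 0 < α) (hα1 : α < 1)
    (hmatch : ∀ M : Finset (Finset V),
      (∀ e ∈ M, ∃ i : Fin T, e = E i) →
      (∀ e ∈ M, ∀ e' ∈ M, e ≠ e' → Disjoint e e') →
      (M.card : ℝ) ≤ α * q)
    (A : Fin q → Finset V)
    (hdisj : ∀ i j, i ≠ j → Disjoint (A i) (A j))
    (hcover : Finset.univ.biUnion A = Finset.univ) :
    (1 / q : ℝ) * ∑ i, (v (A i) : ℝ) ≤ 2 + α := by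
  classical
  -- every bundle has value at most 3
  have hle3 : ∀ i : Fin q, v (A i) ≤ 3 := by
    intro i
    rw [hv]
    apply Finset.sup_le
    intro j _
    calc (A i ∩ E j).card ≤ (E j).card := Finset.card_le_card Finset.inter_subset_right
    _ = 3 := hE3 j
  set B : Finset (Fin q) := Finset.univ.filter (fun i => 3 ≤ v (A i)) with hB
  -- for each i in B, find an edge contained in A i
  have hf : ∀ i ∈ B, ∃ j : Fin T, E j ⊆ A i := by
    intro i hi
    rw [hB, Finset.mem_filter] at hi
    have h3 : 3 ≤ Finset.univ.sup (fun j : Fin T => (A i ∩ E j).card) := by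
      rw [← hv]; exact hi.2
    rw [Finset.le_sup_iff (by norm_num : (⊥ : ℕ) < 3)] at h3
    obtain ⟨j, _, hj⟩ := h3
    refine ⟨j, ?_⟩
    have heq : A i ∩ E j = E j := Finset.eq_of_subset_of_card_le
      Finset.inter_subset_right (by rw [hE3]; exact hj)
    intro x hx
    have hx' : x ∈ A i ∩ E j := by rw [heq]; exact hx
    exact (Finset.mem_inter.mp hx').1
  choose f hfsub using hf
  set M : Finset (Finset V) := B.attach.image (fun x => E (f x.1 x.2)) with hM
  have hMcard : M.card = B.card := by
    rw [hM, Finset.card_image_of_injOn, Finset.card_attach]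
    intro a _ b _ hab
    simp only at hab
    by_contra hne
    have hne' : a.1 ≠ b.1 := fun h => hne (Subtype.ext h)
    have hd := hdisj a.1 b.1 hne'
    have h1 : E (f a.1 a.2) ⊆ A a.1 := hfsub a.1 a.2
    have h2 : E (f a.1 a.2) ⊆ A b.1 := by rw [hab]; exact hfsub b.1 b.2
    have hemp : E (f a.1 a.2) = ∅ := by
      have hdl := Finset.disjoint_left.mp hd
      ext x; simp only [Finset.notMem_empty, iff_false]
      intro hx
      exact hdl (h1 hx) (h2 hx)
    have h3 := hE3 (f a.1 a.2)
    rw [hemp, Finset.card_empty] at h3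
    omega
  have hMmatch : (M.card : ℝ) ≤ α * q := by
    apply hmatch
    · intro e he
      rw [hM, Finset.mem_image] at he
      obtain ⟨x, _, hx⟩ := he
      exact ⟨f x.1 x.2, hx.symm⟩
    · intro e he e' he' hne
      rw [hM, Finset.mem_image] at he he'
      obtain ⟨x, _, hx⟩ := he
      obtain ⟨y, _, hy⟩ := he'
      have hxy : x.1 ≠ y.1 := by
        intro h
        apply hne
        have hxy' : x = y := Subtype.ext h
        rw [← hx, ← hy, hxy']
      have hd := hdisj x.1 y.1 hxy
      rw [← hx, ← hy]
      exact Finset.disjoint_of_subset_left (hfsub x.1 x.2)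
        (Finset.disjoint_of_subset_right (hfsub y.1 y.2) hd)
  -- sum bound in ℕ
  have hsum : ∑ i, v (A i) ≤ 2 * q + B.card := by
    calc ∑ i, v (A i) ≤ ∑ i : Fin q, (2 + if i ∈ B then 1 else 0) := by
          apply Finset.sum_le_sum
          intro i _
          have h3 := hle3 i
          by_cases h : i ∈ B
          · rw [if_pos h]; omega
          · rw [if_neg h]
            have : ¬ 3 ≤ v (A i) := by
              intro hc
              exact h (Finset.mem_filter.mpr ⟨Finset.mem_univ i, hc⟩)
            omega
      _ = 2 * q + B.card := by
          rw [Finset.sum_add_distrib, Finset.sum_const, Finset.card_univ,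
            Fintype.card_fin, Finset.sum_ite_mem, Finset.univ_inter,
            Finset.sum_const]
          simp only [smul_eq_mul, mul_one]
          omega
  -- finish over ℝ
  have hq' : (0:ℝ) < q := by exact_mod_cast hq
  have hB' : (B.card : ℝ) ≤ α * q := hMcard ▸ hMmatch
  have hsum' : (∑ i, (v (A i) : ℝ)) ≤ 2 * q + α * q := by
    have h1 : (∑ i, (v (A i) : ℝ)) = ((∑ i, v (A i) : ℕ) : ℝ) := by push_cast; ring
    rw [h1]
    have h2 : ((∑ i, v (A i) : ℕ) : ℝ) ≤ 2 * q + (B.card : ℝ) := by exact_mod_cast hsum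
    linarith
  rw [one_div, inv_mul_le_iff₀ hq']
  nlinarith
end
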